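/- Let ρ and σ be faithful states of M, ω_N a faithful state of N, t ∈ ℝ, and set ω := R_ρ(ω_N) = ρ^{1/2} ρ_N^{−1/2} ω_N ρ_N^{−1/2} ρ^{1/2}. Then ‖ρ − R_σ^{−t}(ρ_N)‖₁ ≤ 2 ‖ρ^{1/2} − σ^{1/2+it} σ_N^{−1/2−it} ρ_N^{1/2} ω_N^{1/2+it} ρ_N^{−1/2} ρ^{1/2} ω^{−1/2−it}‖₂. -/

import Mathlib

open scoped ComplexOrder
open MeasureTheory Matrix

namespace QFDiv

/-- `Mat n` is the matrix algebra `Mₙ(ℂ)`. -/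
abbrev Mat (n : ℕ) := Matrix (Fin n) (Fin n) ℂ

/-- Hilbert–Schmidt inner product `⟨x, y⟩ = tr(x* y)`. -/
noncomputable def hsInner {n : ℕ} (x y : Mat n) : ℂ := (xᴴ * y).trace

/-- Hilbert–Schmidt norm `‖x‖₂ = tr(x* x)^{1/2}`. -/
noncomputable def hsNorm {n : ℕ} (x : Mat n) : ℝ := Real.sqrt ((xᴴ * x).trace.re)

/-- Trace norm `‖x‖₁ = tr((x* x)^{1/2})`. -/
noncomputable def traceNorm {n : ℕ} (x : Mat n) : ℝ :=
  (((Matrix.posSemidef_conjTranspose_mul_self x).1.eigenvectorUnitary : Mat n) *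
    Matrix.diagonal (fun i => ((Real.sqrt ((Matrix.posSemidef_conjTranspose_mul_self x).1.eigenvalues i) : ℝ) : ℂ)) *
    star ((Matrix.posSemidef_conjTranspose_mul_self x).1.eigenvectorUnitary : Mat n)).trace.re

/-- Operator norm `‖x‖_∞` (as an operator on the Euclidean space `ℂⁿ`). -/
noncomputable def opNorm {n : ℕ} (x : Mat n) : ℝ :=
  ‖Matrix.toEuclideanCLM (𝕜 := ℂ) x‖

/-- Complex matrix power `A^z := exp(z · log A)` for Hermitian (in particular positive
definite) `A`, defined by the spectral functional calculus; junk value `0` otherwise. -/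
noncomputable def mpow {n : ℕ} (A : Mat n) (z : ℂ) : Mat n :=
  if h : A.IsHermitian then
    (h.eigenvectorUnitary : Mat n) *
      Matrix.diagonal (fun i => (h.eigenvalues i : ℂ) ^ z) *
      star (h.eigenvectorUnitary : Mat n)
  else 0

/-- Matrix logarithm via the spectral functional calculus. -/
noncomputable def mlog {n : ℕ} (A : Mat n) : Mat n :=
  if h : A.IsHermitian then
    (h.eigenvectorUnitary : Mat n) *
      Matrix.diagonal (fun i => (Real.log (h.eigenvalues i) : ℂ)) *
      star (h.eigenvectorUnitary : Mat n)
  else 0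

/-- `f(Δ(σ,ω))(x)`, where `Δ(σ,ω) : y ↦ σ y ω⁻¹` is the relative modular operator on the
Hilbert–Schmidt space and `f(Δ(σ,ω))` is its functional calculus:  writing `σ = U diag(s) U*`
and `ω = V diag(w) V*`, the operator `Δ(σ,ω)` has orthonormal eigenvectors `U Eᵢⱼ V*` with
eigenvalues `sᵢ/wⱼ`, so `f(Δ(σ,ω))(x) = U (f(sᵢ/wⱼ) ⊙ (U* x V)) V*`. -/
noncomputable def modApply {n : ℕ} (f : ℝ → ℝ) (σ ω : Mat n) (x : Mat n) : Mat n :=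
  if hσ : σ.IsHermitian then
    if hω : ω.IsHermitian then
      (hσ.eigenvectorUnitary : Mat n) *
        Matrix.of (fun i j =>
          (f (hσ.eigenvalues i / hω.eigenvalues j) : ℂ) *
            ((star (hσ.eigenvectorUnitary : Mat n) * x * (hω.eigenvectorUnitary : Mat n)) i j)) *
        star (hω.eigenvectorUnitary : Mat n)
    else 0
  else 0

/-- Standard `f`-divergence `Q_f(ρ‖σ) = ⟨ρ^{1/2}, f(Δ(σ,ρ))(ρ^{1/2})⟩`. -/
noncomputable def Qf {n : ℕ} (f : ℝ → ℝ) (ρ σ : Mat n) : ℝ :=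
  (hsInner (mpow ρ (1/2)) (modApply f σ ρ (mpow ρ (1/2)))).re

/-- Optimized `f`-divergence `Q̃_f(ρ‖σ) = sup_ω ⟨ρ^{1/2}, f(Δ(σ,ω))(ρ^{1/2})⟩`, where the
supremum runs over all faithful states `ω` of `Mₙ(ℂ)`. -/
noncomputable def Qopt {n : ℕ} (f : ℝ → ℝ) (ρ σ : Mat n) : ℝ :=
  ⨆ ω : {ω : Mat n // ω.PosDef ∧ ω.trace = 1},
    (hsInner (mpow ρ (1/2)) (modApply f σ ω.1 (mpow ρ (1/2)))).re

/-- Optimized `f`-divergence on the subalgebra `N`: the supremum runs over the faithful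
states `ω` of `N`. -/
noncomputable def QoptN {n : ℕ} (f : ℝ → ℝ) (N : StarSubalgebra ℂ (Mat n)) (ρ σ : Mat n) : ℝ :=
  ⨆ ω : {ω : Mat n // ω ∈ N ∧ ω.PosDef ∧ ω.trace = 1},
    (hsInner (mpow ρ (1/2)) (modApply f σ ω.1 (mpow ρ (1/2)))).re

/-- Umegaki relative entropy `D(ρ‖σ) = tr(ρ (log ρ − log σ))`. -/
noncomputable def relEnt {n : ℕ} (ρ σ : Mat n) : ℝ := ((ρ * (mlog ρ - mlog σ)).trace).re

/-- `Q_{x²}(ρ‖σ) = tr(ρ⁻¹ σ²)`. -/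
noncomputable def Qsq {n : ℕ} (ρ σ : Mat n) : ℝ := ((ρ⁻¹ * (σ * σ)).trace).re

/-- `Q_{x⁻¹}(ρ‖σ) = tr(ρ² σ⁻¹)`. -/
noncomputable def Qxinv {n : ℕ} (ρ σ : Mat n) : ℝ := ((ρ * ρ * σ⁻¹).trace).re

/-- Petz–Rényi relative quasi-entropy `Q_s(ρ‖σ) = tr(ρ^{1−s} σ^s)`. -/
noncomputable def Qs {n : ℕ} (s : ℝ) (ρ σ : Mat n) : ℝ :=
  ((mpow ρ (1 - (s : ℂ)) * mpow σ (s : ℂ)).trace).re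

/-- Petz–Rényi relative entropy `D_α(ρ‖σ) = (α−1)⁻¹ log tr(ρ^α σ^{1−α})`. -/
noncomputable def petzRenyi {n : ℕ} (α : ℝ) (ρ σ : Mat n) : ℝ :=
  (α - 1)⁻¹ * Real.log (((mpow ρ (α : ℂ) * mpow σ (1 - (α : ℂ))).trace).re)

/-- Sandwiched Rényi relative quasi-entropy
`Q̃_α(ρ‖σ) = (tr[(ρ^{1/2} σ^{−1/α'} ρ^{1/2})^α])^{1/α}` with `α' = α/(α−1)`,
so that `−1/α' = (1−α)/α`. -/
noncomputable def sandQ {n : ℕ} (α : ℝ) (ρ σ : Mat n) : ℝ :=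
  (((mpow (mpow ρ (1/2) * mpow σ (((1 - α)/α : ℝ) : ℂ) * mpow ρ (1/2)) (α : ℂ)).trace).re)
    ^ (1/α)

/-- Sandwiched Rényi relative entropy `D̃_α(ρ‖σ) = α' log Q̃_α(ρ‖σ)`. -/
noncomputable def sandD {n : ℕ} (α : ℝ) (ρ σ : Mat n) : ℝ :=
  (α/(α-1)) * Real.log (sandQ α ρ σ)

/-- Rotated Petz recovery map
`R_ρ^t(x) = ρ^{1/2−it} ρ_N^{−1/2+it} x ρ_N^{−1/2−it} ρ^{1/2+it}` (here `ρN` is the matrix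
`ρ_N = E(ρ)`). -/
noncomputable def rotPetz {n : ℕ} (ρ ρN : Mat n) (t : ℝ) (x : Mat n) : Mat n :=
  mpow ρ (1/2 - Complex.I * t) * mpow ρN (-(1/2) + Complex.I * t) * x *
    mpow ρN (-(1/2) - Complex.I * t) * mpow ρ (1/2 + Complex.I * t)

/-- The probability measure `dβ(t) = (π/2)(cosh(πt)+1)⁻¹ dt` on `ℝ`. -/
noncomputable def betaMeasure : Measure ℝ :=
  volume.withDensity fun t => ENNReal.ofReal (Real.pi / 2 * (Real.cosh (Real.pi * t) + 1)⁻¹)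

/-- Universal Petz recovery map `R_ρ^u(x) = ∫_ℝ R_ρ^{t/2}(x) dβ(t)` (Bochner integral,
computed entrywise). -/
noncomputable def univPetz {n : ℕ} (ρ ρN : Mat n) (x : Mat n) : Mat n :=
  Matrix.of fun i j => ∫ t : ℝ, rotPetz ρ ρN (t/2) x i j ∂betaMeasure

/-- `E` is the trace-preserving conditional expectation onto the subalgebra `N`, i.e. the
orthogonal projection of `Mₙ(ℂ)` onto `N` for the Hilbert–Schmidt inner product. -/
def IsCondExp {n : ℕ} (N : StarSubalgebra ℂ (Mat n)) (E : Mat n →ₗ[ℂ] Mat n) : Prop :=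
  (∀ x, E x ∈ N) ∧ (∀ x ∈ N, E x = x) ∧ (∀ x y, hsInner (E x) y = hsInner x (E y))

/-- `f` admits the integral representation
`f(x) = a + b x + ∫₀^∞ (1/(λ+x) − λ/(λ²+1)) dν(λ)` for `x > 0`, with `b ≥ 0` and
`∫ λ/(λ²+1) dν(λ) < ∞`. -/
def HasIntRep (f : ℝ → ℝ) (a b : ℝ) (ν : Measure ℝ) : Prop :=
  0 ≤ b ∧
  (∫⁻ l in Set.Ioi (0:ℝ), ENNReal.ofReal (l / (l^2 + 1)) ∂ν) < ⊤ ∧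
  ∀ x : ℝ, 0 < x →
    IntegrableOn (fun l => 1/(l + x) - l/(l^2 + 1)) (Set.Ioi 0) ν ∧
    f x = a + b*x + ∫ l in Set.Ioi (0:ℝ), (1/(l + x) - l/(l^2 + 1)) ∂ν



/-!
Write `A = ρ^{1/2}` and `B = Y V` for the matrix subtracted from it on the right, where
`Y = σ^{1/2+it} σ_N^{-1/2-it} ρ_N^{1/2}`, `V = ω_N^{1/2+it} K* ω^{-1/2-it}` and
`K = ρ^{1/2} ρ_N^{-1/2}`. Since `ω = K ω_N K*`, we get
`V V* = ω_N^{1/2+it} ω_N^{-1} ω_N^{1/2-it} = 1`, hence `ρ = A A*`, `R_σ^{-t}(ρ_N) = B B*`, and `‖A‖₂ = ‖B‖₂ = 1` because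
`tr R_σ^{-t}(ρ_N) = tr ρ_N = tr ρ = 1`. It remains to see `‖A A* - B B*‖₁ ≤ (‖A‖₂ + ‖B‖₂) ‖A - B‖₂`:
with the unitary `S = sign(A A* - B B*)` the trace norm is
`tr(S (A A* - B B*)) = ⟨A - B, S A⟩ + ⟨B, S (A - B)⟩`, and Cauchy–Schwarz bounds both terms.
-/

variable {n : ℕ}

/- Mathlib's `cfc` for Hermitian matrices applies real functions only; the complex powers `mpow`
need `ℝ → ℂ`. -/
noncomputable def funCalc (f : ℝ → ℂ) (A : Mat n) : Mat n :=
  if h : A.IsHermitian then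
    (h.eigenvectorUnitary : Mat n) * diagonal (fun i => f (h.eigenvalues i)) *
      star (h.eigenvectorUnitary : Mat n)
  else 0

section FunctionalCalculus

variable {A : Mat n} (hA : A.IsHermitian)
include hA

lemma funCalc_def (f : ℝ → ℂ) :
    funCalc f A = (hA.eigenvectorUnitary : Mat n) * diagonal (fun i => f (hA.eigenvalues i)) *
      star (hA.eigenvectorUnitary : Mat n) :=
  dif_pos hA

lemma funCalc_congr {f g : ℝ → ℂ} (hfg : ∀ i, f (hA.eigenvalues i) = g (hA.eigenvalues i)) :
    funCalc f A = funCalc g A := by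
  rw [funCalc_def hA, funCalc_def hA, funext hfg]

lemma funCalc_mul (f g : ℝ → ℂ) : funCalc f A * funCalc g A = funCalc (fun x => f x * g x) A := by
  have hU : star (hA.eigenvectorUnitary : Mat n) * hA.eigenvectorUnitary = 1 :=
    Unitary.star_mul_self_of_mem hA.eigenvectorUnitary.2
  rw [funCalc_def hA, funCalc_def hA, funCalc_def hA, ← diagonal_mul_diagonal]
  simp only [Matrix.mul_assoc]
  rw [← Matrix.mul_assoc (star _) _ _, hU, Matrix.one_mul]

lemma conjTranspose_funCalc (f : ℝ → ℂ) : (funCalc f A)ᴴ = funCalc (fun x => star (f x)) A := by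
  rw [funCalc_def hA, funCalc_def hA]
  simp only [conjTranspose_mul, star_eq_conjTranspose, conjTranspose_conjTranspose,
    diagonal_conjTranspose, Matrix.mul_assoc]
  rfl

lemma trace_funCalc (f : ℝ → ℂ) : (funCalc f A).trace = ∑ i, f (hA.eigenvalues i) := by
  rw [funCalc_def hA, trace_mul_cycle, Unitary.star_mul_self_of_mem hA.eigenvectorUnitary.2,
    Matrix.one_mul, trace_diagonal]

lemma funCalc_eq_cfc (f : ℝ → ℂ) :
    funCalc f A = cfc (fun x => (f x).re) A + Complex.I • cfc (fun x => (f x).im) A := by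
  rw [hA.cfc_eq, hA.cfc_eq, IsHermitian.cfc, IsHermitian.cfc, Unitary.conjStarAlgAut_apply,
    Unitary.conjStarAlgAut_apply, funCalc_def hA, ← Matrix.smul_mul, ← Matrix.mul_smul,
    ← Matrix.add_mul, ← Matrix.mul_add, ← diagonal_smul, diagonal_add]
  congr
  funext i
  simp only [Pi.smul_apply, Function.comp_apply, smul_eq_mul]
  rw [mul_comm]
  exact (Complex.re_add_im _).symm

lemma funCalc_one : funCalc (fun _ => 1) A = 1 := by
  rw [funCalc_eq_cfc hA]
  simp [cfc_const_one ℝ A]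

lemma funCalc_id : funCalc (fun x => (x : ℂ)) A = A := by
  rw [funCalc_eq_cfc hA]
  simp [cfc_id' ℝ A hA.isSelfAdjoint]

lemma funCalc_mul_self (f : ℝ → ℂ) : funCalc f A * A = funCalc (fun x => f x * x) A := by
  conv_lhs => arg 2; rw [← funCalc_id hA]
  exact funCalc_mul hA _ _

lemma funCalc_mem {S : StarSubalgebra ℂ (Mat n)} (hAS : A ∈ S) (f : ℝ → ℂ) : funCalc f A ∈ S := by
  have : IsClosed (S : Set (Mat n)) := S.toSubalgebra.toSubmodule.closed_of_finiteDimensional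
  rw [funCalc_eq_cfc hA]
  exact add_mem (cfc_mem _ hAS) (SMulMemClass.smul_mem _ (cfc_mem _ hAS))

end FunctionalCalculus

lemma star_ofReal_cpow {x : ℝ} (hx : 0 < x) (z : ℂ) : star ((x : ℂ) ^ z) = (x : ℂ) ^ star z := by
  have harg : (x : ℂ).arg ≠ Real.pi := by
    rw [Complex.arg_ofReal_of_nonneg hx.le]
    exact Real.pi_ne_zero.symm
  rw [Complex.star_def, Complex.cpow_conj _ _ harg, Complex.conj_ofReal]

section MatrixPower

variable {A : Mat n}

lemma mpow_eq_funCalc (A : Mat n) (z : ℂ) : mpow A z = funCalc (fun x => (x : ℂ) ^ z) A := rfl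

lemma mpow_zero (hA : A.IsHermitian) : mpow A 0 = 1 := by
  simp only [mpow_eq_funCalc, Complex.cpow_zero, funCalc_one hA]

lemma mpow_one (hA : A.IsHermitian) : mpow A 1 = A := by
  simp only [mpow_eq_funCalc, Complex.cpow_one, funCalc_id hA]

lemma mpow_mem (hA : A.IsHermitian) {S : StarSubalgebra ℂ (Mat n)} (hAS : A ∈ S) (z : ℂ) :
    mpow A z ∈ S := by
  rw [mpow_eq_funCalc]
  exact funCalc_mem hA hAS _

variable (hA : A.PosDef)
include hA

lemma mpow_add (z w : ℂ) : mpow A (z + w) = mpow A z * mpow A w := by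
  rw [mpow_eq_funCalc, mpow_eq_funCalc, mpow_eq_funCalc, funCalc_mul hA.1]
  exact funCalc_congr hA.1 fun i =>
    Complex.cpow_add _ _ (Complex.ofReal_ne_zero.mpr (hA.eigenvalues_pos i).ne')

lemma mpow_mul_mpow {z w x : ℂ} (h : z + w = x) : mpow A z * mpow A w = mpow A x := by
  rw [← mpow_add hA, h]

lemma mpow_mul_mpow_mul {z w x : ℂ} (h : z + w = x) (X : Mat n) :
    mpow A z * (mpow A w * X) = mpow A x * X := by
  rw [← Matrix.mul_assoc, mpow_mul_mpow hA h]

lemma conjTranspose_mpow (z : ℂ) : (mpow A z)ᴴ = mpow A (star z) := by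
  rw [mpow_eq_funCalc, mpow_eq_funCalc, conjTranspose_funCalc hA.1]
  exact funCalc_congr hA.1 fun i => star_ofReal_cpow (hA.eigenvalues_pos i) z

lemma mpow_half_mul_conjTranspose_self : mpow A (1/2) * (mpow A (1/2))ᴴ = A := by
  rw [conjTranspose_mpow hA, mpow_mul_mpow hA (by norm_num : (1/2 : ℂ) + star (1/2) = 1),
    mpow_one hA.1]

lemma isUnit_mpow (z : ℂ) : IsUnit (mpow A z) := by
  have h : mpow A z * mpow A (-z) = 1 := by
    rw [mpow_mul_mpow hA (add_neg_cancel z), mpow_zero hA.1]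
  exact ⟨⟨_, _, h, mul_eq_one_comm.mp h⟩, rfl⟩

lemma mpow_neg_one : mpow A (-1) = A⁻¹ := by
  refine (inv_eq_right_inv ?_).symm
  nth_rewrite 1 [← mpow_one hA.1]
  rw [mpow_mul_mpow hA (add_neg_cancel 1), mpow_zero hA.1]

end MatrixPower

section HilbertSchmidt

noncomputable def hsVec (x : Mat n) : EuclideanSpace ℂ (Fin n × Fin n) :=
  WithLp.toLp 2 fun p => x p.1 p.2

lemma hsInner_eq_inner (x y : Mat n) : hsInner x y = inner ℂ (hsVec x) (hsVec y) := by
  rw [PiLp.inner_apply, Fintype.sum_prod_type, Finset.sum_comm]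
  simp [hsInner, Matrix.trace, Matrix.mul_apply, hsVec, mul_comm]

lemma hsNorm_eq_norm (x : Mat n) : hsNorm x = ‖hsVec x‖ := by
  rw [hsNorm, show (xᴴ * x).trace = hsInner x x from rfl, hsInner_eq_inner,
    ← RCLike.re_eq_complex_re, inner_self_eq_norm_sq, Real.sqrt_sq (norm_nonneg _)]

lemma norm_hsInner_le (x y : Mat n) : ‖hsInner x y‖ ≤ hsNorm x * hsNorm y := by
  rw [hsInner_eq_inner, hsNorm_eq_norm, hsNorm_eq_norm]
  exact norm_inner_le_norm _ _

lemma hsNorm_mul_of_conjTranspose_mul_eq_one {U : Mat n} (hU : Uᴴ * U = 1) (x : Mat n) :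
    hsNorm (U * x) = hsNorm x := by
  rw [hsNorm, hsNorm, conjTranspose_mul, Matrix.mul_assoc, ← Matrix.mul_assoc Uᴴ, hU,
    Matrix.one_mul]

lemma hsNorm_eq_sqrt_trace_mul_conjTranspose (x : Mat n) :
    hsNorm x = √(x * xᴴ).trace.re := by
  rw [hsNorm, trace_mul_comm]

end HilbertSchmidt

section TraceNorm

open scoped MatrixOrder

lemma traceNorm_eq_re_trace_sqrt (x : Mat n) : traceNorm x = (CFC.sqrt (xᴴ * x)).trace.re := by
  have hx := posSemidef_conjTranspose_mul_self x
  have h : traceNorm x = (funCalc (fun y => ((√y : ℝ) : ℂ)) (xᴴ * x)).trace.re := by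
    rw [funCalc_def hx.1]
    rfl
  rw [h, funCalc_eq_cfc hx.1, CFC.sqrt_eq_cfc, cfc_nnreal_eq_real _ _ hx.nonneg]
  simp only [Complex.ofReal_re, Complex.ofReal_im, cfc_const_zero, smul_zero, add_zero,
    Real.sqrt.eq_1]

lemma sqrt_conjTranspose_mul_self_eq_funCalc_abs {C : Mat n} (hC : C.IsHermitian) :
    CFC.sqrt (Cᴴ * C) = funCalc (fun x => ((|x| : ℝ) : ℂ)) C := by
  refine CFC.sqrt_unique ?_ ?_
  · rw [funCalc_mul hC]
    calc _ = funCalc (fun x => (x : ℂ) * x) C :=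
          funCalc_congr hC fun i => by exact_mod_cast abs_mul_abs_self _
      _ = Cᴴ * C := by rw [hC.eq, ← funCalc_mul_self hC, funCalc_id hC]
  · rw [funCalc_eq_cfc hC]
    simpa using cfc_nonneg fun x _ => abs_nonneg x

lemma exists_unitary_traceNorm_eq {C : Mat n} (hC : C.IsHermitian) :
    ∃ S : Mat n, Sᴴ * S = 1 ∧ traceNorm C = (S * C).trace.re := by
  let sgn : ℝ → ℂ := fun x => if x < 0 then -1 else 1
  refine ⟨funCalc sgn C, ?_, ?_⟩
  · rw [conjTranspose_funCalc hC, funCalc_mul hC, ← funCalc_one hC]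
    exact funCalc_congr hC fun i => by dsimp only [sgn]; split_ifs <;> simp
  · rw [traceNorm_eq_re_trace_sqrt, sqrt_conjTranspose_mul_self_eq_funCalc_abs hC,
      funCalc_mul_self hC]
    refine congrArg _ (congrArg _ (funCalc_congr hC fun i => ?_))
    dsimp only [sgn]
    split_ifs with h
    · rw [abs_of_neg h]; push_cast; ring
    · rw [abs_of_nonneg (not_lt.mp h)]; ring

lemma traceNorm_mul_conjTranspose_sub_le (A B : Mat n) :
    traceNorm (A * Aᴴ - B * Bᴴ) ≤ (hsNorm A + hsNorm B) * hsNorm (A - B) := by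
  obtain ⟨S, hS, htn⟩ := exists_unitary_traceNorm_eq
    ((isHermitian_mul_conjTranspose_self A).sub (isHermitian_mul_conjTranspose_self B))
  have hsplit : S * (A * Aᴴ - B * Bᴴ) = S * A * (A - B)ᴴ + S * (A - B) * Bᴴ := by
    rw [conjTranspose_sub]
    noncomm_ring
  have trace_mul_conjTranspose (X Y : Mat n) : (X * Yᴴ).trace = hsInner Y X := trace_mul_comm _ _
  calc traceNorm (A * Aᴴ - B * Bᴴ)
      ≤ ‖(S * (A * Aᴴ - B * Bᴴ)).trace‖ := htn ▸ Complex.re_le_norm _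
    _ = ‖hsInner (A - B) (S * A) + hsInner B (S * (A - B))‖ := by
      rw [hsplit, trace_add, trace_mul_conjTranspose, trace_mul_conjTranspose]
    _ ≤ hsNorm (A - B) * hsNorm (S * A) + hsNorm B * hsNorm (S * (A - B)) :=
      (norm_add_le _ _).trans (add_le_add (norm_hsInner_le _ _) (norm_hsInner_le _ _))
    _ = (hsNorm A + hsNorm B) * hsNorm (A - B) := by
      rw [hsNorm_mul_of_conjTranspose_mul_eq_one hS, hsNorm_mul_of_conjTranspose_mul_eq_one hS]
      ring

end TraceNorm

lemma conjTranspose_mem {N : StarSubalgebra ℂ (Mat n)} {a : Mat n} (ha : a ∈ N) : aᴴ ∈ N :=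
  star_mem ha

namespace IsCondExp

variable {N : StarSubalgebra ℂ (Mat n)} {E : Mat n →ₗ[ℂ] Mat n} (hE : IsCondExp N E)
include hE

lemma trace_mul_apply {a : Mat n} (ha : a ∈ N) (x : Mat n) : (a * E x).trace = (a * x).trace := by
  have h := hE.2.2 aᴴ x
  rw [hE.2.1 _ (conjTranspose_mem ha)] at h
  simpa [hsInner] using h.symm

lemma trace_apply (x : Mat n) : (E x).trace = x.trace := by
  simpa using hE.trace_mul_apply (one_mem N) x

lemma isHermitian_apply {x : Mat n} (hx : x.IsHermitian) : (E x).IsHermitian := by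
  -- `d` lies in `N` and is trace-orthogonal to `N`, in particular to `dᴴ`.
  set d := (E x)ᴴ - E x
  have hd : d ∈ N := sub_mem (conjTranspose_mem (hE.1 x)) (hE.1 x)
  have htr : ∀ a ∈ N, (a * (E x)ᴴ).trace = (a * E x).trace := fun a ha =>
    calc (a * (E x)ᴴ).trace = star (aᴴ * E x).trace := by
          rw [← trace_conjTranspose, conjTranspose_mul, conjTranspose_conjTranspose, trace_mul_comm]
      _ = star (aᴴ * x).trace := by rw [hE.trace_mul_apply (conjTranspose_mem ha)]
      _ = (a * E x).trace := by
          rw [← trace_conjTranspose, conjTranspose_mul, conjTranspose_conjTranspose, hx.eq,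
            trace_mul_comm, hE.trace_mul_apply ha]
  have hdd : (dᴴ * d).trace = 0 := by
    rw [Matrix.mul_sub, trace_sub, htr _ (conjTranspose_mem hd), sub_self]
  exact sub_eq_zero.mp (trace_conjTranspose_mul_self_eq_zero_iff.mp hdd)

lemma posDef_apply {x : Mat n} (hx : x.PosDef) : (E x).PosDef := by
  -- For an eigenvalue `λᵢ ≤ 0` of `E x`, the spectral projection `p` onto it lies in `N`, so
  -- `0 < tr(p x) = tr(p E x) ≤ 0`.
  have hh := hE.isHermitian_apply hx.1
  rw [hh.posDef_iff_eigenvalues_pos]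
  intro i
  by_contra! hle
  set U : Mat n := (hh.eigenvectorUnitary : Mat n)
  set g : ℝ → ℂ := fun y => if y = hh.eigenvalues i then 1 else 0
  have hpN : funCalc g (E x) ∈ N := funCalc_mem hh (hE.1 x) g
  have hnonpos : (funCalc g (E x) * E x).trace ≤ 0 := by
    rw [funCalc_mul_self hh, trace_funCalc hh]
    refine Finset.sum_nonpos fun j _ => ?_
    by_cases hj : hh.eigenvalues j = hh.eigenvalues i
    · simp only [g, hj, if_true, one_mul]
      exact_mod_cast hle
    · simp [g, hj]
  have hpos : 0 < (funCalc g (E x) * x).trace := by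
    have hconj : (star U * x * U).PosDef :=
      (Matrix.IsUnit.posDef_star_left_conjugate_iff Unitary.isUnit_coe).mpr hx
    have htr : (funCalc g (E x) * x).trace = ∑ j, g (hh.eigenvalues j) * (star U * x * U) j j := by
      rw [funCalc_def hh, Matrix.mul_assoc, Matrix.mul_assoc, trace_mul_comm, Matrix.mul_assoc]
      simp only [Matrix.trace, diag, diagonal_mul]
      rfl
    rw [htr]
    refine Finset.sum_pos' (fun j _ => ?_) ⟨i, Finset.mem_univ i, by simpa [g] using hconj.diag_pos⟩
    by_cases hj : hh.eigenvalues j = hh.eigenvalues i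
    · simpa [g, hj] using hconj.diag_pos.le
    · simp [g, hj]
  rw [hE.trace_mul_apply hpN] at hnonpos
  exact hpos.not_ge hnonpos

lemma trace_rotPetz {σ : Mat n} (hσ : σ.PosDef) (t : ℝ) {x : Mat n} (hx : x ∈ N) :
    (rotPetz σ (E σ) t x).trace = x.trace := by
  have hσN := hE.posDef_apply hσ
  set M := mpow (E σ) (-(1/2) + Complex.I * t) * x * mpow (E σ) (-(1/2) - Complex.I * t)
  have hM : M ∈ N := mul_mem (mul_mem (mpow_mem hσN.1 (hE.1 σ) _) hx) (mpow_mem hσN.1 (hE.1 σ) _)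
  calc (rotPetz σ (E σ) t x).trace
      = (mpow σ (1/2 + Complex.I * t) * mpow σ (1/2 - Complex.I * t) * M).trace := by
        rw [rotPetz, trace_mul_comm]
        simp only [M, Matrix.mul_assoc]
    _ = (M * E σ).trace := by
        rw [mpow_mul_mpow hσ (by ring : 1/2 + Complex.I * t + (1/2 - Complex.I * t) = 1),
          mpow_one hσ.1, trace_mul_comm, hE.trace_mul_apply hM]
    _ = x.trace := by
        rw [← mpow_one hσN.1, trace_mul_comm]
        simp only [M, ← Matrix.mul_assoc]
        rw [mpow_mul_mpow hσN (by ring : 1 + (-(1/2) + Complex.I * t) = 1/2 + Complex.I * t),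
          trace_mul_comm, ← Matrix.mul_assoc,
          mpow_mul_mpow hσN (by ring : -(1/2) - Complex.I * t + (1/2 + Complex.I * t) = 0),
          mpow_zero hσN.1, Matrix.one_mul]

end IsCondExp

lemma rotPetz_neg_eq_mul_conjTranspose {σ σN x : Mat n} (hσ : σ.PosDef) (hσN : σN.PosDef)
    (hx : x.PosDef) (t : ℝ) :
    rotPetz σ σN (-t) x =
      (mpow σ (1/2 + Complex.I * t) * mpow σN (-(1/2) - Complex.I * t) * mpow x (1/2)) *
        (mpow σ (1/2 + Complex.I * t) * mpow σN (-(1/2) - Complex.I * t) * mpow x (1/2))ᴴ := by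
  simp only [conjTranspose_mul, conjTranspose_mpow hσ, conjTranspose_mpow hσN,
    conjTranspose_mpow hx, Matrix.mul_assoc, Complex.star_def, map_add, map_sub, map_neg, map_mul,
    map_div₀, map_one, map_ofNat, Complex.conj_I, Complex.conj_ofReal]
  rw [mpow_mul_mpow_mul hx (by norm_num : (1/2 : ℂ) + 1/2 = 1), mpow_one hx.1, rotPetz]
  simp only [Complex.ofReal_neg, Matrix.mul_assoc]
  ring_nf

lemma mpow_mul_conjTranspose_mul_mpow_neg_mem_unitary {W K ω : Mat n} (hW : W.PosDef)
    (hK : IsUnit K) (hωK : ω = K * W * Kᴴ) {u : ℂ} (hu : u + star u = 1) :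
    mpow W u * Kᴴ * mpow ω (-u) ∈ unitary (Mat n) := by
  have hω : ω.PosDef := hωK ▸ (IsUnit.posDef_star_right_conjugate_iff hK).mpr hW
  have hKdet : IsUnit K.det := (isUnit_iff_isUnit_det K).mp hK
  have hinv : Kᴴ * ω⁻¹ * K = W⁻¹ := by
    rw [hωK, Matrix.mul_inv_rev, Matrix.mul_inv_rev, ← Matrix.mul_assoc, ← Matrix.mul_assoc,
      mul_nonsing_inv _ (by simpa using hKdet), Matrix.one_mul, Matrix.mul_assoc,
      nonsing_inv_mul _ hKdet, Matrix.mul_one]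
  refine Matrix.mem_unitaryGroup_iff.mpr ?_
  calc _ = mpow W u * (Kᴴ * mpow ω (-1) * K) * mpow W (star u) := by
        simp only [star_eq_conjTranspose, conjTranspose_mul, conjTranspose_mpow hW,
          conjTranspose_mpow hω, conjTranspose_conjTranspose, star_neg, Matrix.mul_assoc]
        rw [mpow_mul_mpow_mul hω (by rw [← neg_add, hu])]
    _ = 1 := by
        rw [mpow_neg_one hω, hinv, ← mpow_neg_one hW, mpow_mul_mpow hW (rfl : u + -1 = u + -1),
          mpow_mul_mpow hW (by rw [add_right_comm, hu, add_neg_cancel]), mpow_zero hW.1]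

lemma mem_unitary_of_eq_petzRecovery {ρ ρN ωN ω : Mat n} (hρ : ρ.PosDef)
    (hρN : ρN.PosDef) (hωN : ωN.PosDef)
    (hω : ω = mpow ρ (1/2) * mpow ρN (-(1/2)) * ωN * mpow ρN (-(1/2)) * mpow ρ (1/2)) (t : ℝ) :
    mpow ωN (1/2 + Complex.I * t) * mpow ρN (-(1/2)) * mpow ρ (1/2) *
      mpow ω (-(1/2) - Complex.I * t) ∈ unitary (Mat n) := by
  set K := mpow ρ (1/2) * mpow ρN (-(1/2))
  have hKH : Kᴴ = mpow ρN (-(1/2)) * mpow ρ (1/2) := by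
    simp [K, conjTranspose_mpow hρ, conjTranspose_mpow hρN]
  have hωK : ω = K * ωN * Kᴴ := by
    rw [hω, hKH]
    simp only [Matrix.mul_assoc]
  have hV := mpow_mul_conjTranspose_mul_mpow_neg_mem_unitary hωN
    ((isUnit_mpow hρ _).mul (isUnit_mpow hρN _)) hωK (u := 1/2 + Complex.I * t)
    (by simp [Complex.ext_iff]; norm_num)
  rwa [hKH, neg_add', ← Matrix.mul_assoc] at hV

theorem stmt14_general (n : ℕ) (N : StarSubalgebra ℂ (Mat n)) (E : Mat n →ₗ[ℂ] Mat n)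
    (hE : IsCondExp N E)
    (ρ σ : Mat n) (hρ : ρ.PosDef) (hρ1 : ρ.trace = 1) (hσ : σ.PosDef)
    (t : ℝ)
    (ωN : Mat n) (hωN' : ωN.PosDef)
    (ω : Mat n)
    (hω : ω = mpow ρ (1/2) * mpow (E ρ) (-(1/2)) * ωN * mpow (E ρ) (-(1/2)) * mpow ρ (1/2)) :
    traceNorm (ρ - rotPetz σ (E σ) (-t) (E ρ)) ≤
      2 * hsNorm (mpow ρ (1/2) -
        mpow σ (1/2 + Complex.I * t) * mpow (E σ) (-(1/2) - Complex.I * t) *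
          mpow (E ρ) (1/2) * mpow ωN (1/2 + Complex.I * t) * mpow (E ρ) (-(1/2)) *
          mpow ρ (1/2) * mpow ω (-(1/2) - Complex.I * t)) := by
  have hρN := hE.posDef_apply hρ
  set A := mpow ρ (1/2)
  set Y := mpow σ (1/2 + Complex.I * t) * mpow (E σ) (-(1/2) - Complex.I * t) * mpow (E ρ) (1/2)
  set V := mpow ωN (1/2 + Complex.I * t) * mpow (E ρ) (-(1/2)) * A * mpow ω (-(1/2) - Complex.I * t)
  have hV : V * Vᴴ = 1 := Unitary.mul_star_self_of_mem <|
    mem_unitary_of_eq_petzRecovery hρ hρN hωN' hω t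
  have hA : A * Aᴴ = ρ := mpow_half_mul_conjTranspose_self hρ
  have hB : Y * V * (Y * V)ᴴ = rotPetz σ (E σ) (-t) (E ρ) := by
    rw [conjTranspose_mul, Matrix.mul_assoc, ← Matrix.mul_assoc V, hV, Matrix.one_mul,
      rotPetz_neg_eq_mul_conjTranspose hσ (hE.posDef_apply hσ) hρN]
  have hnA : hsNorm A = 1 := by
    rw [hsNorm_eq_sqrt_trace_mul_conjTranspose, hA, hρ1]
    simp
  have hnB : hsNorm (Y * V) = 1 := by
    rw [hsNorm_eq_sqrt_trace_mul_conjTranspose, hB, hE.trace_rotPetz hσ _ (hE.1 ρ),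
      hE.trace_apply, hρ1]
    simp
  calc traceNorm (ρ - rotPetz σ (E σ) (-t) (E ρ))
      = traceNorm (A * Aᴴ - Y * V * (Y * V)ᴴ) := by rw [hA, hB]
    _ ≤ (hsNorm A + hsNorm (Y * V)) * hsNorm (A - Y * V) := traceNorm_mul_conjTranspose_sub_le _ _
    _ = 2 * hsNorm (A - Y * V) := by rw [hnA, hnB]; norm_num
    _ = _ := by simp only [Y, V, Matrix.mul_assoc]

/-- Lemma 3.19: with `ω_N` a faithful state of `N` and
`ω := R_ρ(ω_N) = ρ^{1/2} ρ_N^{−1/2} ω_N ρ_N^{−1/2} ρ^{1/2}`, one has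
`‖ρ − R_σ^{−t}(ρ_N)‖₁ ≤
  2 ‖ρ^{1/2} − σ^{1/2+it} σ_N^{−1/2−it} ρ_N^{1/2} ω_N^{1/2+it} ρ_N^{−1/2} ρ^{1/2} ω^{−1/2−it}‖₂`. -/
theorem stmt14 (n : ℕ) (N : StarSubalgebra ℂ (Mat n)) (E : Mat n →ₗ[ℂ] Mat n)
    (hE : IsCondExp N E)
    (ρ σ : Mat n) (hρ : ρ.PosDef) (hρ1 : ρ.trace = 1) (hσ : σ.PosDef) (hσ1 : σ.trace = 1)
    (t : ℝ)
    (ωN : Mat n) (hωN : ωN ∈ N) (hωN' : ωN.PosDef) (hωN1 : ωN.trace = 1)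
    (ω : Mat n)
    (hω : ω = mpow ρ (1/2) * mpow (E ρ) (-(1/2)) * ωN * mpow (E ρ) (-(1/2)) * mpow ρ (1/2)) :
    traceNorm (ρ - rotPetz σ (E σ) (-t) (E ρ)) ≤
      2 * hsNorm (mpow ρ (1/2) -
        mpow σ (1/2 + Complex.I * t) * mpow (E σ) (-(1/2) - Complex.I * t) *
          mpow (E ρ) (1/2) * mpow ωN (1/2 + Complex.I * t) * mpow (E ρ) (-(1/2)) *
          mpow ρ (1/2) * mpow ω (-(1/2) - Complex.I * t)) :=
  stmt14_general n N E hE ρ σ hρ hρ1 hσ t ωN hωN' ω hω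

end QFDiv
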